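/- Every infinite-dimensional Lindenstrauss space has the strong diameter 2 property. That is, if X is an infinite-dimensional real Banach space whose dual X* is isometrically isomorphic to L¹(μ) for some measure μ, then every finite convex combination of slices of the closed unit ball B_X has diameter 2. -/

import Mathlib

universe u v

open Metric Set

section Defs

variable {Y : Type*} [NormedAddCommGroup Y] [NormedSpace ℝ Y]

/-- `X` is an ideal in `Y`. -/
def IsIdeal (X : Subspace ℝ Y) : Prop :=
  ∀ ε : ℝ, 0 < ε → ∀ E : Subspace ℝ Y, FiniteDimensional ℝ E →
    ∃ T : E →ₗ[ℝ] X,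
      (∀ e : E, (e : Y) ∈ X → ((T e : X) : Y) = (e : Y)) ∧
      (∀ e : E, ‖T e‖ ≤ (1 + ε) * ‖e‖)

/-- `X` is a super-ideal in `Y`. -/
def IsSuperIdeal (X : Subspace ℝ Y) : Prop :=
  ∀ ε : ℝ, 0 < ε → ∀ E : Subspace ℝ Y, FiniteDimensional ℝ E →
    ∃ T : E →ₗ[ℝ] X,
      (∀ e : E, (e : Y) ∈ X → ((T e : X) : Y) = (e : Y)) ∧
      (∀ e : E, (1 + ε)⁻¹ * ‖e‖ ≤ ‖T e‖ ∧ ‖T e‖ ≤ (1 + ε) * ‖e‖)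

/-- `X` is a super u-ideal in `Y`. -/
def IsSuperUIdeal (X : Subspace ℝ Y) : Prop :=
  ∀ ε : ℝ, 0 < ε → ∀ E : Subspace ℝ Y, FiniteDimensional ℝ E →
    ∃ T : E →ₗ[ℝ] X,
      (∀ e : E, (e : Y) ∈ X → ((T e : X) : Y) = (e : Y)) ∧
      (∀ e : E, (1 + ε)⁻¹ * ‖e‖ ≤ ‖T e‖ ∧ ‖T e‖ ≤ (1 + ε) * ‖e‖) ∧
      (∀ e : E, ‖(e : Y) - (2 : ℝ) • ((T e : X) : Y)‖ ≤ (1 + ε) * ‖e‖)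

/-- `φ : X* → Y*` is a Hahn-Banach extension operator. -/
def IsHahnBanachExtensionOperator (X : Subspace ℝ Y)
    (φ : (X →L[ℝ] ℝ) →L[ℝ] (Y →L[ℝ] ℝ)) : Prop :=
  ∀ f : X →L[ℝ] ℝ, (∀ x : X, φ f (x : Y) = f x) ∧ ‖φ f‖ = ‖f‖

/-- A set of functionals `V ⊆ Y*` is 1-norming for `Y`. -/
def IsOneNorming (V : Set (Y →L[ℝ] ℝ)) : Prop :=
  ∀ y : Y, ‖y‖ = sSup {r : ℝ | ∃ v ∈ V, ‖v‖ ≤ 1 ∧ r = |v y|}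

end Defs

section Props

variable (Z : Type*) [NormedAddCommGroup Z] [NormedSpace ℝ Z]

/-- A slice of the closed unit ball of `Z`. -/
def IsSlice (S : Set Z) : Prop :=
  ∃ (f : Z →L[ℝ] ℝ) (ε : ℝ), ‖f‖ = 1 ∧ 0 < ε ∧
    S = {z | z ∈ closedBall (0 : Z) 1 ∧ 1 - ε < f z}

/-- The local diameter 2 property. -/
def HasLocalDiameterTwoProperty : Prop :=
  ∀ S : Set Z, IsSlice Z S → Metric.diam S = 2

/-- The diameter 2 property. -/
def HasDiameterTwoProperty : Prop :=
  ∀ U : Set Z, U.Nonempty →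
    (∃ V : Set Z, @IsOpen (WeakSpace ℝ Z) _ V ∧ U = V ∩ closedBall (0 : Z) 1) →
    Metric.diam U = 2

/-- The strong diameter 2 property. -/
def HasStrongDiameterTwoProperty : Prop :=
  ∀ (n : ℕ), 0 < n → ∀ (S : Fin n → Set Z) (lam : Fin n → ℝ),
    (∀ i, IsSlice Z (S i)) → (∀ i, 0 ≤ lam i) → (∑ i, lam i) = 1 →
    Metric.diam {z : Z | ∃ x : Fin n → Z, (∀ i, x i ∈ S i) ∧ z = ∑ i, lam i • x i} = 2

/-- The Daugavet property. -/
def HasDaugavetProperty : Prop :=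
  ∀ T : Z →L[ℝ] Z, Module.finrank ℝ (LinearMap.range (T : Z →ₗ[ℝ] Z)) = 1 →
    ‖ContinuousLinearMap.id ℝ Z + T‖ = 1 + ‖T‖

end Props

/-- `X` is a Gurariĭ space. -/
def IsGurarii (X : Type*) [NormedAddCommGroup X] [NormedSpace ℝ X] : Prop :=
  ∀ ε : ℝ, 0 < ε →
    ∀ (F : Type) [NormedAddCommGroup F] [NormedSpace ℝ F] [FiniteDimensional ℝ F],
      ∀ (E : Subspace ℝ F) (TE : E →ₗᵢ[ℝ] X),
        ∃ TF : F →ₗ[ℝ] X,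
          (∀ e : E, TF (e : F) = TE e) ∧
          (∀ f : F, (1 + ε)⁻¹ * ‖f‖ ≤ ‖TF f‖ ∧ ‖TF f‖ ≤ (1 + ε) * ‖f‖)

/-- `X` is a Lindenstrauss space: its dual is isometric to some `L¹(μ)`. -/
def IsLindenstrauss (X : Type u) [NormedAddCommGroup X] [NormedSpace ℝ X] : Prop :=
  ∃ (α : Type u) (m : MeasurableSpace α) (μ : @MeasureTheory.Measure α m),
    Nonempty ((X →L[ℝ] ℝ) ≃ₗᵢ[ℝ] MeasureTheory.Lp ℝ 1 μ)

/-!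
A norm-one functional `g` with `‖f ± g‖ ≈ ‖f‖ + 1` for finitely many given `f` exists in
`L¹(μ)` as soon as it is infinite-dimensional: then `μ` admits arbitrarily many disjoint sets
of positive finite measure (a maximal finite family of them would consist of atoms, and
`L¹(μ)` would be spanned by their indicators), so one of them, `A`, carries little of the
integral of `∑ |f|`, and `g = 1_A / μ(A)` is almost disjointly supported from every `f`.
Transported to `X* ≅ L¹(μ)`, such a `g` with `‖fᵢ ± g‖ ≈ 2` for the functionals `fᵢ` defining
the slices yields points `xᵢ, yᵢ` of the `i`-th slice with `g xᵢ ≈ 1` and `g yᵢ ≈ -1`, so the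
convex combinations `∑ λᵢ xᵢ` and `∑ λᵢ yᵢ` are at distance almost `2`.
-/

/-- Octahedrality of the norm, in its equivalent form over finite sets rather than over
finite-dimensional subspaces. -/
def IsOctahedral (E : Type*) [SeminormedAddCommGroup E] : Prop :=
  ∀ (s : Finset E) (δ : ℝ), 0 < δ → ∃ g : E, ‖g‖ = 1 ∧ ∀ f ∈ s, ‖f‖ + 1 - δ ≤ ‖f + g‖

theorem IsOctahedral.of_linearIsometryEquiv {𝕜 E F : Type*} [Semiring 𝕜]
    [SeminormedAddCommGroup E] [SeminormedAddCommGroup F] [Module 𝕜 E] [Module 𝕜 F]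
    (hF : IsOctahedral F) (e : E ≃ₗᵢ[𝕜] F) : IsOctahedral E := by
  classical
  intro s δ hδ
  obtain ⟨g, hg, hs⟩ := hF (s.image e) δ hδ
  refine ⟨e.symm g, by rw [e.symm.norm_map, hg], fun f hf => ?_⟩
  have := hs (e f) (Finset.mem_image_of_mem e hf)
  rwa [← e.apply_symm_apply g, ← map_add, e.norm_map, e.norm_map] at this

section StrongDiameterTwo

variable {Z : Type*} [NormedAddCommGroup Z] [NormedSpace ℝ Z]

theorem ContinuousLinearMap.exists_norm_le_one_lt_apply (f : Z →L[ℝ] ℝ) {r : ℝ} (hr : r < ‖f‖) :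
    ∃ x, ‖x‖ ≤ 1 ∧ r < f x := by
  obtain ⟨x, hx, hfx⟩ := f.exists_lt_apply_of_lt_opNorm hr
  rcases le_or_gt 0 (f x) with h | h
  · exact ⟨x, hx.le, by rwa [Real.norm_of_nonneg h] at hfx⟩
  · refine ⟨-x, by rw [norm_neg]; exact hx.le, ?_⟩
    rwa [map_neg, ← abs_of_neg h, ← Real.norm_eq_abs]

theorem exists_mem_closedBall_lt_apply_of_lt_norm_add {f G : Z →L[ℝ] ℝ} (hf : ‖f‖ ≤ 1)
    (hG : ‖G‖ ≤ 1) {η : ℝ} (h : 2 - η < ‖f + G‖) :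
    ∃ x ∈ closedBall (0 : Z) 1, 1 - η < f x ∧ 1 - η < G x := by
  obtain ⟨x, hx, hfGx⟩ := (f + G).exists_norm_le_one_lt_apply h
  have hle : ∀ φ : Z →L[ℝ] ℝ, ‖φ‖ ≤ 1 → φ x ≤ 1 := fun φ hφ =>
    (Real.le_norm_self _).trans ((φ.le_opNorm x).trans (mul_le_one₀ hφ (norm_nonneg x) hx))
  rw [add_apply] at hfGx
  exact ⟨x, mem_closedBall_zero_iff.2 hx, by linarith [hle G hG], by linarith [hle f hf]⟩

theorem le_dist_sum_smul_of_le_apply_sub {ι : Type*} [Fintype ι] {G : Z →L[ℝ] ℝ} (hG : ‖G‖ ≤ 1)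
    {lam : ι → ℝ} (hlam : ∀ i, 0 ≤ lam i) (hsum : ∑ i, lam i = 1) {x y : ι → Z} {c : ℝ}
    (hxy : ∀ i, c ≤ G (x i) - G (y i)) :
    c ≤ dist (∑ i, lam i • x i) (∑ i, lam i • y i) := calc
  c = ∑ i, lam i * c := by rw [← Finset.sum_mul, hsum, one_mul]
  _ ≤ ∑ i, lam i * (G (x i) - G (y i)) :=
    Finset.sum_le_sum fun i _ => mul_le_mul_of_nonneg_left (hxy i) (hlam i)
  _ = G (∑ i, lam i • x i - ∑ i, lam i • y i) := by
    simp [map_sum, mul_sub, Finset.sum_sub_distrib]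
  _ ≤ ‖G‖ * ‖∑ i, lam i • x i - ∑ i, lam i • y i‖ := (Real.le_norm_self _).trans (G.le_opNorm _)
  _ ≤ dist (∑ i, lam i • x i) (∑ i, lam i • y i) := by
    rw [dist_eq_norm]
    exact mul_le_of_le_one_left (norm_nonneg _) hG

theorem exists_mem_closedBall_of_isOctahedral_dual (h : IsOctahedral (Z →L[ℝ] ℝ))
    {ι : Type*} [Fintype ι] (f : ι → Z →L[ℝ] ℝ) (hf : ∀ i, ‖f i‖ = 1) {η : ℝ} (hη : 0 < η) :
    ∃ G : Z →L[ℝ] ℝ, ‖G‖ = 1 ∧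
      (∀ i, ∃ x ∈ closedBall (0 : Z) 1, 1 - η < f i x ∧ 1 - η < G x) ∧
      (∀ i, ∃ y ∈ closedBall (0 : Z) 1, 1 - η < f i y ∧ 1 - η < (-G) y) := by
  classical
  obtain ⟨G, hG, hfG⟩ := h (Finset.univ.image f ∪ Finset.univ.image (-f)) (η / 2) (half_pos hη)
  refine ⟨G, hG, fun i => ?_, fun i => ?_⟩
  · have := hfG (f i) (by simp)
    exact exists_mem_closedBall_lt_apply_of_lt_norm_add (hf i).le hG.le (by linarith [hf i])
  · have := hfG (-f i) (by simp)
    rw [norm_neg, ← norm_neg (-f i + G), neg_add, neg_neg] at this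
    exact exists_mem_closedBall_lt_apply_of_lt_norm_add (hf i).le (by rw [norm_neg, hG])
      (by linarith [hf i])

theorem hasStrongDiameterTwoProperty_of_isOctahedral_dual (h : IsOctahedral (Z →L[ℝ] ℝ)) :
    HasStrongDiameterTwoProperty Z := by
  intro n hn S lam hS hlam hsum
  choose f ε hf hε hSf using hS
  have : Nonempty (Fin n) := ⟨⟨0, hn⟩⟩
  obtain ⟨i₀, hi₀⟩ := Finite.exists_min ε
  set D := {z : Z | ∃ x : Fin n → Z, (∀ i, x i ∈ S i) ∧ z = ∑ i, lam i • x i}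
  have hD : D ⊆ closedBall 0 1 := by
    rintro _ ⟨x, hx, rfl⟩
    refine (convex_closedBall 0 1).sum_mem (fun i _ => hlam i) hsum fun i _ => ?_
    exact (hSf i ▸ hx i).1
  refine le_antisymm ((diam_mono hD isBounded_closedBall).trans
    ((diam_closedBall zero_le_one).trans_eq (mul_one 2))) (le_of_forall_sub_le fun η hη => ?_)
  have hδ := min_le_left (ε i₀) (η / 2)
  have hδ' := min_le_right (ε i₀) (η / 2)
  obtain ⟨G, hG, hx, hy⟩ :=
    exists_mem_closedBall_of_isOctahedral_dual h f hf (lt_min (hε i₀) (half_pos hη))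
  choose x hxB hfx hGx using hx
  choose y hyB hfy hGy using hy
  have hmem : ∀ i, ∀ z ∈ closedBall (0 : Z) 1, 1 - min (ε i₀) (η / 2) < f i z → z ∈ S i :=
    fun i z hz hfz => hSf i ▸ ⟨hz, by linarith [hi₀ i]⟩
  have hdist : 2 - η ≤ dist (∑ i, lam i • x i) (∑ i, lam i • y i) :=
    le_dist_sum_smul_of_le_apply_sub hG.le hlam hsum fun i => by
      linarith [hGx i, neg_apply G (y i) ▸ hGy i]
  exact hdist.trans (dist_le_diam_of_mem (isBounded_closedBall.subset hD)
    ⟨x, fun i => hmem i _ (hxB i) (hfx i), rfl⟩ ⟨y, fun i => hmem i _ (hyB i) (hfy i), rfl⟩)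

end StrongDiameterTwo

namespace MeasureTheory

open Function

variable {α : Type*} [MeasurableSpace α] {μ : Measure α}

structure IsDisjointPosFiniteFamily (μ : Measure α) {n : ℕ} (A : Fin n → Set α) : Prop where
  measurableSet : ∀ i, MeasurableSet (A i)
  pairwise_disjoint : Pairwise (Disjoint on A)
  measure_ne_zero : ∀ i, μ (A i) ≠ 0
  measure_ne_top : ∀ i, μ (A i) ≠ ⊤

namespace IsDisjointPosFiniteFamily

variable {n : ℕ} {A : Fin n → Set α}

theorem cons (hA : IsDisjointPosFiniteFamily μ A) {T : Set α} (hT : MeasurableSet T)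
    (hT0 : μ T ≠ 0) (hTtop : μ T ≠ ⊤) (hdisj : ∀ i, Disjoint T (A i)) :
    IsDisjointPosFiniteFamily μ (Fin.cons T A : Fin (n + 1) → Set α) where
  measurableSet := Fin.cases hT hA.measurableSet
  pairwise_disjoint := by
    intro i j hij
    cases i using Fin.cases <;> cases j using Fin.cases
    · exact absurd rfl hij
    · exact hdisj _
    · exact (hdisj _).symm
    · exact hA.pairwise_disjoint (fun h => hij (congrArg Fin.succ h))
  measure_ne_zero := Fin.cases hT0 hA.measure_ne_zero
  measure_ne_top := Fin.cases hTtop hA.measure_ne_top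

theorem update (hA : IsDisjointPosFiniteFamily μ A) (k : Fin n) {S : Set α}
    (hS : MeasurableSet S) (hSA : S ⊆ A k) (hS0 : μ S ≠ 0) :
    IsDisjointPosFiniteFamily μ (Function.update A k S) where
  measurableSet i := by
    rcases eq_or_ne i k with rfl | hi
    · simpa using hS
    · simpa [hi] using hA.measurableSet i
  pairwise_disjoint := by
    have hsub : ∀ i, Function.update A k S i ⊆ A i := by
      intro i
      rcases eq_or_ne i k with rfl | hi
      · simpa using hSA
      · simp [hi]
    exact fun i j hij => (hA.pairwise_disjoint hij).mono (hsub i) (hsub j)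
  measure_ne_zero i := by
    rcases eq_or_ne i k with rfl | hi
    · simpa using hS0
    · simpa [hi] using hA.measure_ne_zero i
  measure_ne_top i := by
    rcases eq_or_ne i k with rfl | hi
    · simpa using ne_top_of_le_ne_top (hA.measure_ne_top i) (measure_mono hSA)
    · simpa [hi] using hA.measure_ne_top i

section Maximal

variable (hA : IsDisjointPosFiniteFamily μ A)
  (hmax : ∀ B : Fin (n + 1) → Set α, ¬ IsDisjointPosFiniteFamily μ B)
include hA hmax

theorem ae_restrict_mem_or_notMem_of_maximal (k : Fin n) {S : Set α} (hS : MeasurableSet S) :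
    (∀ᵐ x ∂μ.restrict (A k), x ∈ S) ∨ (∀ᵐ x ∂μ.restrict (A k), x ∉ S) := by
  change S ∈ ae _ ∨ Sᶜ ∈ ae _
  rw [mem_ae_iff, mem_ae_iff, compl_compl, Measure.restrict_apply hS.compl,
    Measure.restrict_apply hS]
  by_contra! h
  have hdisj : ∀ i, Disjoint (Sᶜ ∩ A k) (Function.update A k (S ∩ A k) i) := by
    intro i
    rcases eq_or_ne i k with rfl | hi
    · simpa using disjoint_compl_left.mono inter_subset_left inter_subset_left
    · simpa [hi] using (hA.pairwise_disjoint hi.symm).mono_left inter_subset_right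
  exact hmax _ ((hA.update k (hS.inter (hA.measurableSet k)) inter_subset_right h.2).cons
    (hS.compl.inter (hA.measurableSet k)) h.1
    (ne_top_of_le_ne_top (hA.measure_ne_top k) (measure_mono inter_subset_right)) hdisj)

theorem exists_ae_restrict_eq_const_of_maximal (k : Fin n) {g : α → ℝ} (hg : Measurable g) :
    ∃ c, g =ᵐ[μ.restrict (A k)] const α c :=
  Filter.exists_eventuallyEq_const_of_forall_separating MeasurableSet fun _ hU =>
    hA.ae_restrict_mem_or_notMem_of_maximal hmax k (hg hU)

theorem ae_eq_zero_of_notMem_iUnion_of_maximal {g : α → ℝ} (hg : Measurable g)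
    (hgi : Integrable g μ) : ∀ᵐ x ∂μ, x ∉ ⋃ k, A k → g x = 0 := by
  rw [ae_iff]
  have hcover : {x | ¬(x ∉ ⋃ k, A k → g x = 0)} ⊆
      ⋃ m : ℕ, {x | 1 / ((m : ℝ) + 1) ≤ ‖g x‖} \ ⋃ k, A k := by
    intro x hx
    push Not at hx
    obtain ⟨m, hm⟩ := exists_nat_one_div_lt (norm_pos_iff.2 hx.2)
    exact mem_iUnion.2 ⟨m, hm.le, hx.1⟩
  refine measure_mono_null hcover (measure_iUnion_null fun m => ?_)
  by_contra h0
  refine hmax _ (hA.cons ((measurableSet_le measurable_const hg.norm).diff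
    (MeasurableSet.iUnion hA.measurableSet)) h0 ?_ fun i => ?_)
  · exact ne_top_of_le_ne_top (hgi.measure_norm_ge_lt_top (by positivity)).ne
      (measure_mono sdiff_subset)
  · exact disjoint_sdiff_left.mono_right (subset_iUnion A i)

theorem finiteDimensional_Lp_one_of_maximal : FiniteDimensional ℝ (Lp ℝ 1 μ) := by
  let Φ : Lp ℝ 1 μ →ₗ[ℝ] (Fin n → ℝ) := LinearMap.pi fun k =>
    (L1.integralCLM.comp (LpToLpRestrictCLM α ℝ ℝ μ 1 (A k))).toLinearMap
  have hΦ : ∀ g k, Φ g k = ∫ x in A k, g x ∂μ := fun g k => by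
    simp only [Φ, LinearMap.pi_apply, ContinuousLinearMap.coe_coe,
      ContinuousLinearMap.comp_apply, ← L1.integral_eq, L1.integral_eq_integral]
    exact integral_congr_ae (LpToLpRestrictCLM_coeFn ℝ (A k) g)
  refine Module.Finite.of_injective Φ ((injective_iff_map_eq_zero Φ).2 fun g hg => ?_)
  have hgm : Measurable g := (Lp.stronglyMeasurable g).measurable
  have hon : ∀ k, ∀ᵐ x ∂μ.restrict (A k), g x = 0 := by
    intro k
    obtain ⟨c, hc⟩ := hA.exists_ae_restrict_eq_const_of_maximal hmax k hgm
    have hint : ∫ x in A k, g x ∂μ = μ.real (A k) * c := by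
      simp [integral_congr_ae hc]
    have hc0 : c = 0 := by
      have := congrFun hg k
      rw [hΦ, hint] at this
      exact (mul_eq_zero.1 this).resolve_left
        (ENNReal.toReal_ne_zero.2 ⟨hA.measure_ne_zero k, hA.measure_ne_top k⟩)
    filter_upwards [hc] with x hx
    simpa [hc0] using hx
  have hU : ∀ᵐ x ∂μ, x ∈ ⋃ k, A k → g x = 0 :=
    (ae_restrict_iff' (MeasurableSet.iUnion hA.measurableSet)).1
      ((ae_restrict_iUnion_iff _ _).2 hon)
  rw [Lp.eq_zero_iff_ae_eq_zero]
  filter_upwards [hU, hA.ae_eq_zero_of_notMem_iUnion_of_maximal hmax hgm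
    (L1.integrable_coeFn g)] with x h₁ h₂
  by_cases hx : x ∈ ⋃ k, A k
  exacts [h₁ hx, h₂ hx]

end Maximal

end IsDisjointPosFiniteFamily

theorem exists_isDisjointPosFiniteFamily (h : ¬ FiniteDimensional ℝ (Lp ℝ 1 μ)) :
    ∀ n, ∃ A : Fin n → Set α, IsDisjointPosFiniteFamily μ A
  | 0 => ⟨finZeroElim, ⟨finZeroElim, fun i => i.elim0, finZeroElim, finZeroElim⟩⟩
  | n + 1 => by
    obtain ⟨A, hA⟩ := exists_isDisjointPosFiniteFamily h n
    by_contra! hmax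
    exact h (hA.finiteDimensional_Lp_one_of_maximal hmax)

theorem exists_setIntegral_lt_of_not_finiteDimensional (h : ¬ FiniteDimensional ℝ (Lp ℝ 1 μ))
    {H : α → ℝ} (hH : Integrable H μ) (hH0 : 0 ≤ᵐ[μ] H) {δ : ℝ} (hδ : 0 < δ) :
    ∃ A, MeasurableSet A ∧ μ A ≠ 0 ∧ μ A ≠ ⊤ ∧ ∫ x in A, H x ∂μ < δ := by
  obtain ⟨N, hN⟩ := exists_nat_gt ((∫ x, H x ∂μ) / δ)
  obtain ⟨A, hA⟩ := exists_isDisjointPosFiniteFamily h N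
  by_contra! hge
  have hNδ : N * δ ≤ ∫ x, H x ∂μ := calc
    N * δ = ∑ _k : Fin N, δ := by simp
    _ ≤ ∑ k, ∫ x in A k, H x ∂μ := Finset.sum_le_sum fun k _ =>
      hge _ (hA.measurableSet k) (hA.measure_ne_zero k) (hA.measure_ne_top k)
    _ = ∫ x in ⋃ k, A k, H x ∂μ :=
      (integral_iUnion_fintype hA.measurableSet hA.pairwise_disjoint fun _ => hH.integrableOn).symm
    _ ≤ ∫ x, H x ∂μ := setIntegral_le_integral hH hH0
  rw [div_lt_iff₀ hδ] at hN
  linarith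

theorem L1.norm_add_norm_le_norm_add_add_two_mul_setIntegral (f g : Lp ℝ 1 μ) {A : Set α}
    (hA : MeasurableSet A) (hg : ∀ᵐ x ∂μ, x ∉ A → g x = 0) :
    ‖f‖ + ‖g‖ ≤ ‖f + g‖ + 2 * ∫ x in A, ‖f x‖ ∂μ := by
  have hf := L1.integrable_coeFn f
  have hg' := L1.integrable_coeFn g
  have hpt : ∀ᵐ x ∂μ, ‖f x‖ + ‖g x‖ ≤ ‖(f + g) x‖ + 2 * A.indicator (fun x => ‖f x‖) x := by
    filter_upwards [hg, Lp.coeFn_add f g] with x hgx hfgx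
    rw [hfgx, Pi.add_apply]
    by_cases hx : x ∈ A
    · rw [indicator_of_mem hx]
      have := norm_sub_le (f x + g x) (f x)
      rw [add_sub_cancel_left] at this
      linarith
    · simp [indicator_of_notMem hx, hgx hx]
  have hfg := (L1.integrable_coeFn (f + g)).norm
  have hfA := (hf.norm.indicator hA).const_mul 2
  calc ‖f‖ + ‖g‖ = ∫ x, (‖f x‖ + ‖g x‖) ∂μ := by
        rw [MeasureTheory.integral_add hf.norm hg'.norm, L1.norm_eq_integral_norm,
          L1.norm_eq_integral_norm]
    _ ≤ ∫ x, (‖(f + g) x‖ + 2 * A.indicator (fun x => ‖f x‖) x) ∂μ :=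
        integral_mono_ae (hf.norm.add hg'.norm) (hfg.add hfA) hpt
    _ = ‖f + g‖ + 2 * ∫ x in A, ‖f x‖ ∂μ := by
        rw [MeasureTheory.integral_add hfg hfA, integral_const_mul, integral_indicator hA,
          L1.norm_eq_integral_norm]

theorem isOctahedral_Lp_one (h : ¬ FiniteDimensional ℝ (Lp ℝ 1 μ)) : IsOctahedral (Lp ℝ 1 μ) := by
  intro s δ hδ
  obtain ⟨A, hAm, hA0, hAtop, hAint⟩ := exists_setIntegral_lt_of_not_finiteDimensional h
    (integrable_finsetSum s fun f _ => (L1.integrable_coeFn f).norm)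
    (ae_of_all _ fun x => Finset.sum_nonneg fun f _ => norm_nonneg (f x)) (half_pos hδ)
  have hμA : 0 < μ.real A := ENNReal.toReal_pos hA0 hAtop
  let g := indicatorConstLp 1 hAm hAtop (μ.real A)⁻¹
  have hg : ‖g‖ = 1 := by
    rw [norm_indicatorConstLp one_ne_zero ENNReal.one_ne_top]
    simp [hμA.ne', abs_of_pos hμA]
  have hgA : ∀ᵐ x ∂μ, x ∉ A → g x = 0 := by
    filter_upwards [indicatorConstLp_coeFn (p := 1) (hs := hAm) (hμs := hAtop)
      (c := (μ.real A)⁻¹)] with x hx hxA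
    rw [hx, indicator_of_notMem hxA]
  refine ⟨g, hg, fun f hf => ?_⟩
  have hfA : ∫ x in A, ‖f x‖ ∂μ ≤ ∫ x in A, ∑ f ∈ s, ‖f x‖ ∂μ :=
    integral_mono (L1.integrable_coeFn f).norm.integrableOn
      (integrable_finsetSum s fun f _ => (L1.integrable_coeFn f).norm).integrableOn
      fun x => Finset.single_le_sum (f := fun f : Lp ℝ 1 μ => ‖f x‖) (fun _ _ => norm_nonneg _) hf
  have := L1.norm_add_norm_le_norm_add_add_two_mul_setIntegral f g hAm hgA
  linarith

end MeasureTheory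

theorem lindenstrauss_strongDiameterTwoProperty_general
    (X : Type u) [NormedAddCommGroup X] [NormedSpace ℝ X]
    (hinf : ¬ FiniteDimensional ℝ X) (hX : IsLindenstrauss X) :
    HasStrongDiameterTwoProperty X := by
  obtain ⟨α, _, μ, ⟨e⟩⟩ := hX
  have hdual : ¬ FiniteDimensional ℝ (X →L[ℝ] ℝ) := fun _ =>
    hinf (FiniteDimensional.of_injective (NormedSpace.inclusionInDoubleDualLi ℝ).toLinearMap
      (NormedSpace.inclusionInDoubleDualLi ℝ).injective)
  have hL1 : ¬ FiniteDimensional ℝ (MeasureTheory.Lp ℝ 1 μ) := fun _ =>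
    hdual (Module.Finite.equiv e.symm.toLinearEquiv)
  exact hasStrongDiameterTwoProperty_of_isOctahedral_dual
    ((MeasureTheory.isOctahedral_Lp_one hL1).of_linearIsometryEquiv e)

theorem lindenstrauss_strongDiameterTwoProperty
    (X : Type u) [NormedAddCommGroup X] [NormedSpace ℝ X] [CompleteSpace X]
    (hinf : ¬ FiniteDimensional ℝ X) (hX : IsLindenstrauss X) :
    HasStrongDiameterTwoProperty X :=
  lindenstrauss_strongDiameterTwoProperty_general X hinf hX
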